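/- Fix θ > 0 and t > 0, set b_t = θ(1+√t)², and let f_t be the equilibrium density of the measure μ^t. Then lim_{ε→0⁺} ∫_ℝ f_t(x)/(b_t + ε − x) dx = θ^{−1}·log(1 + t^{−1/2}); i.e. the Stieltjes transform G_{μ^t}(z) = ∫ (z−x)^{−1} dμ^t(x) satisfies lim_{ε→0⁺} G_{μ^t}(b_t + ε) = θ^{−1}·log(1 + t^{−1/2}). -/

import Mathlib

/-!
Since `f_t` vanishes beyond `b_t`, dominated convergence reduces the limit to
`∫ f_t(x) / (b_t - x) dx`. On the arccot part of the support substitute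
`x = θ(1 + t) + 2θ√t cos φ`, `φ ∈ (0, π)`: with `c = √t` the integrand becomes
`(θπ)⁻¹ arg(c + e^{iφ}) cot(φ/2)`. Now `arg(c + e^{iφ})` is `arg(1 + c⁻¹e^{iφ})` for `c ≥ 1` and
`φ - arg(1 + c e^{iφ}) = 2 arg(1 + e^{iφ}) - arg(1 + c e^{iφ})` for `c ≤ 1`, so everything reduces
to `∫₀^π arg(1 + s e^{iφ}) cot(φ/2) dφ = π log(1 + s)` for `0 ≤ s ≤ 1`, obtained by differentiating
in `s`. For `t < 1` the flat part `θ⁻¹` on `[0, θ(1 - √t)²]` adds `θ⁻¹ log((1 + c)² / 4c)`, which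
turns `θ⁻¹ log(4 / (1 + c))` into `θ⁻¹ log(1 + 1/c)`.
-/

open Filter MeasureTheory

attribute [local instance] Classical.propDecidable

noncomputable section

/-- The equilibrium density `f_t` of the measure `μ^t`, with `arccot` realized as
`π/2 - arctan` (values in `(0, π)`). -/
def eqDensity (θ t : ℝ) (x : ℝ) : ℝ :=
  if θ * (Real.sqrt t - 1) ^ 2 < x ∧ x < θ * (Real.sqrt t + 1) ^ 2 then
    (θ * Real.pi)⁻¹ *
      (Real.pi / 2 -
        Real.arctan ((x + θ * (t - 1)) / Real.sqrt (4 * θ * t * x - (x + θ * (t - 1)) ^ 2)))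
  else if t < 1 ∧ 0 ≤ x ∧ x ≤ θ * (Real.sqrt t - 1) ^ 2 then θ⁻¹
  else 0

section

open Real Set Topology

lemma Real.arctan_le_self {x : ℝ} (hx : 0 ≤ x) : arctan x ≤ x := by
  simpa [tan_arctan] using le_tan (arctan_nonneg.2 hx) (arctan_lt_pi_div_two x)

lemma Real.arctan_cos_div_sin {φ : ℝ} (hφ : φ ∈ Ioo 0 π) : arctan (cos φ / sin φ) = π / 2 - φ := by
  rw [← arctan_tan (x := π / 2 - φ) (by linarith [hφ.2]) (by linarith [hφ.1]),
    tan_eq_sin_div_cos, sin_pi_div_two_sub, cos_pi_div_two_sub]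

lemma Real.neg_one_lt_cos_of_mem_Ioo {φ : ℝ} (hφ : φ ∈ Ioo 0 π) : -1 < cos φ := by
  nlinarith [sin_pos_of_pos_of_lt_pi hφ.1 hφ.2, sin_sq_add_cos_sq φ, neg_one_le_cos φ]

lemma one_add_mul_cos_pos {s φ : ℝ} (hs₀ : 0 ≤ s) (hs₁ : s ≤ 1) (hφ : φ ∈ Ioo 0 π) :
    0 < 1 + s * cos φ := by
  have hcos := neg_one_lt_cos_of_mem_Ioo hφ
  nlinarith [mul_nonneg hs₀ (by linarith : 0 ≤ 1 + cos φ),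
    mul_nonneg (sub_nonneg.2 hs₁) (sub_nonneg.2 (cos_le_one φ))]

lemma hasDerivAt_arctan_div {n m : ℝ → ℝ} {n' m' x : ℝ} (hn : HasDerivAt n n' x)
    (hm : HasDerivAt m m' x) (hx : m x ≠ 0) :
    HasDerivAt (fun y => arctan (n y / m y))
      ((n' * m x - n x * m') / (m x ^ 2 + n x ^ 2)) x := by
  refine (hn.div hm hx).arctan.congr_deriv ?_
  have : m x ^ 2 + n x ^ 2 ≠ 0 := (add_pos_of_pos_of_nonneg (by positivity) (sq_nonneg _)).ne'
  simp only [Pi.div_apply]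
  field_simp

lemma one_add_two_mul_cos_add_sq (s φ : ℝ) :
    1 + 2 * s * cos φ + s ^ 2 = (1 + s * cos φ) ^ 2 + (s * sin φ) ^ 2 := by
  linear_combination -s ^ 2 * sin_sq_add_cos_sq φ

/-- `arctan (s sin φ / (1 + s cos φ))` is `arg (1 + s e^{iφ})` and `(1 + cos φ) / sin φ` is
`cot (φ / 2)`. -/
def logKernel (s φ : ℝ) : ℝ :=
  arctan (s * sin φ / (1 + s * cos φ)) * ((1 + cos φ) / sin φ)

lemma logKernel_zero_left (φ : ℝ) : logKernel 0 φ = 0 := by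
  simp [logKernel]

lemma measurable_logKernel (s : ℝ) : Measurable (logKernel s) := by
  unfold logKernel
  fun_prop

lemma logKernel_mem_Icc {s φ : ℝ} (hs₀ : 0 ≤ s) (hs₁ : s ≤ 1) (hφ : φ ∈ Ioo 0 π) :
    logKernel s φ ∈ Icc 0 1 := by
  have hsin := sin_pos_of_pos_of_lt_pi hφ.1 hφ.2
  have hcos := neg_one_lt_cos_of_mem_Ioo hφ
  have hM := one_add_mul_cos_pos hs₀ hs₁ hφ
  have harg : 0 ≤ s * sin φ / (1 + s * cos φ) := by positivity
  have hcot : 0 ≤ (1 + cos φ) / sin φ := div_nonneg (by linarith) hsin.le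
  refine ⟨mul_nonneg (arctan_nonneg.2 harg) hcot, ?_⟩
  calc logKernel s φ ≤ s * sin φ / (1 + s * cos φ) * ((1 + cos φ) / sin φ) :=
        mul_le_mul_of_nonneg_right (arctan_le_self harg) hcot
    _ = s * (1 + cos φ) / (1 + s * cos φ) := by field_simp
    _ ≤ 1 := by rw [div_le_one hM]; linarith

lemma integrableOn_logKernel {s : ℝ} (hs₀ : 0 ≤ s) (hs₁ : s ≤ 1) :
    IntegrableOn (logKernel s) (Ioo 0 π) := by
  refine Measure.integrableOn_of_bounded (M := 1) (by simp)
    (measurable_logKernel s).aestronglyMeasurable ?_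
  filter_upwards [ae_restrict_mem measurableSet_Ioo] with φ hφ
  have h := logKernel_mem_Icc hs₀ hs₁ hφ
  rw [norm_of_nonneg h.1]
  exact h.2

lemma hasDerivAt_logKernel {s φ : ℝ} (hsin : sin φ ≠ 0) (hM : 1 + s * cos φ ≠ 0) :
    HasDerivAt (fun r => logKernel r φ) ((1 + cos φ) / (1 + 2 * s * cos φ + s ^ 2)) s := by
  have h := (hasDerivAt_arctan_div (hasDerivAt_mul_const (sin φ))
    ((hasDerivAt_mul_const (cos φ)).const_add 1) hM).mul_const ((1 + cos φ) / sin φ)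
  refine h.congr_deriv ?_
  rw [one_add_two_mul_cos_add_sq]
  have : (1 + s * cos φ) ^ 2 + (s * sin φ) ^ 2 ≠ 0 :=
    (add_pos_of_pos_of_nonneg (by positivity) (sq_nonneg _)).ne'
  field_simp
  ring

lemma integral_one_add_cos_div {s : ℝ} (hs₀ : s ≠ 0) (hs : |s| < 1) :
    ∫ φ in Ioo 0 π, (1 + cos φ) / (1 + 2 * s * cos φ + s ^ 2) = π / (1 + s) := by
  obtain ⟨hs₁, hs₂⟩ := abs_lt.1 hs
  have hM : ∀ φ, 0 < 1 + s * cos φ := fun φ => by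
    have : |s * cos φ| < 1 := by
      rw [abs_mul]
      nlinarith [abs_cos_le_one φ, abs_nonneg (cos φ), abs_nonneg s]
    linarith [neg_abs_le (s * cos φ)]
  have hD : ∀ φ, 0 < (1 + s * cos φ) ^ 2 + (s * sin φ) ^ 2 := fun φ =>
    add_pos_of_pos_of_nonneg (pow_pos (hM φ) 2) (sq_nonneg _)
  -- antiderivative: split `1 + cos φ` along `1 + 2 s cos φ + s²` and `s (s + cos φ)`
  have hW : ∀ φ ∈ uIcc 0 π, HasDerivAt
      (fun φ => φ / (1 + s) + (1 - s) / (s * (1 + s)) * arctan (s * sin φ / (1 + s * cos φ)))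
      ((1 + cos φ) / (1 + 2 * s * cos φ + s ^ 2)) φ := by
    intro φ _
    have h := ((hasDerivAt_id φ).div_const (1 + s)).add
      ((hasDerivAt_arctan_div ((hasDerivAt_sin φ).const_mul s)
        (((hasDerivAt_cos φ).const_mul s).const_add 1) (hM φ).ne').const_mul
        ((1 - s) / (s * (1 + s))))
    refine h.congr_deriv ?_
    have hnum : s * cos φ * (1 + s * cos φ) - s * sin φ * (s * -sin φ) = s * (s + cos φ) := by
      linear_combination s ^ 2 * sin_sq_add_cos_sq φ
    have : 1 + 2 * s * cos φ + s ^ 2 ≠ 0 := by rw [one_add_two_mul_cos_add_sq]; exact (hD φ).ne'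
    rw [hnum, ← one_add_two_mul_cos_add_sq]
    have : 1 + s ≠ 0 := by linarith
    generalize hD' : 1 + 2 * s * cos φ + s ^ 2 = D at *
    field_simp
    rw [← hD']
    ring
  have hint : IntervalIntegrable (fun φ => (1 + cos φ) / (1 + 2 * s * cos φ + s ^ 2)) volume 0 π :=
    (Continuous.intervalIntegrable (by
      refine Continuous.div (by fun_prop) (by fun_prop) fun φ => ?_
      rw [one_add_two_mul_cos_add_sq]
      exact (hD φ).ne') _ _)
  rw [← integral_Ioc_eq_integral_Ioo, ← intervalIntegral.integral_of_le pi_pos.le,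
    intervalIntegral.integral_eq_sub_of_hasDerivAt hW hint]
  simp

lemma hasDerivAt_integral_logKernel {s : ℝ} (hs₀ : 0 < s) (hs₁ : s < 1) :
    HasDerivAt (fun r => ∫ φ in Ioo 0 π, logKernel r φ) (π / (1 + s)) s := by
  have hU : Ioo (s / 2) 1 ∈ 𝓝 s := Ioo_mem_nhds (by linarith) hs₁
  have hbound : ∀ x ∈ Ioo (s / 2) 1, ∀ φ ∈ Ioo 0 π,
      ‖(1 + cos φ) / (1 + 2 * x * cos φ + x ^ 2)‖ ≤ 1 / s := by
    intro x hx φ hφ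
    have hcos := neg_one_lt_cos_of_mem_Ioo hφ
    -- `1 + 2 x cos φ + x² = (1 - x)² + 2 x (1 + cos φ)`
    have hD : 2 * x * (1 + cos φ) ≤ 1 + 2 * x * cos φ + x ^ 2 := by nlinarith [sq_nonneg (1 - x)]
    have hpos : 0 < 2 * x * (1 + cos φ) := by nlinarith [hx.1]
    rw [norm_of_nonneg (div_nonneg (by linarith) (by linarith)), div_le_div_iff₀ (by linarith)
      (by linarith)]
    nlinarith [hx.1]
  have key := hasDerivAt_integral_of_dominated_loc_of_deriv_le (μ := volume.restrict (Ioo 0 π))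
    (F' := fun x φ => (1 + cos φ) / (1 + 2 * x * cos φ + x ^ 2)) (bound := fun _ => 1 / s) hU
    (.of_forall fun x => (measurable_logKernel x).aestronglyMeasurable)
    (integrableOn_logKernel hs₀.le hs₁.le) (Measurable.aestronglyMeasurable (by fun_prop))
    ((ae_restrict_mem measurableSet_Ioo).mono fun φ hφ x hx => hbound x hx φ hφ)
    (integrable_const _)
    ((ae_restrict_mem measurableSet_Ioo).mono fun φ hφ x hx =>
      hasDerivAt_logKernel (sin_pos_of_pos_of_lt_pi hφ.1 hφ.2).ne'
        (one_add_mul_cos_pos (by linarith [hx.1]) hx.2.le hφ).ne')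
  rw [integral_one_add_cos_div hs₀.ne' (abs_lt.2 ⟨by linarith, hs₁⟩)] at key
  exact key.2

lemma continuousOn_integral_logKernel :
    ContinuousOn (fun s => ∫ φ in Ioo 0 π, logKernel s φ) (Icc 0 1) := by
  refine continuousOn_of_dominated (bound := fun _ => 1)
    (fun s _ => (measurable_logKernel s).aestronglyMeasurable) (fun s hs => ?_)
    (integrable_const _) ?_
  · filter_upwards [ae_restrict_mem measurableSet_Ioo] with φ hφ
    have h := logKernel_mem_Icc hs.1 hs.2 hφ
    rw [norm_of_nonneg h.1]
    exact h.2
  · filter_upwards [ae_restrict_mem measurableSet_Ioo] with φ hφ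
    refine ContinuousOn.mul ?_ continuousOn_const
    refine continuous_arctan.comp_continuousOn (ContinuousOn.div (by fun_prop) (by fun_prop) ?_)
    exact fun s hs => (one_add_mul_cos_pos hs.1 hs.2 hφ).ne'

lemma integral_logKernel {s : ℝ} (hs₀ : 0 ≤ s) (hs₁ : s ≤ 1) :
    ∫ φ in Ioo 0 π, logKernel s φ = π * log (1 + s) := by
  have h := intervalIntegral.integral_eq_sub_of_hasDerivAt_of_le hs₀
    (f := fun r => (∫ φ in Ioo 0 π, logKernel r φ) - π * log (1 + r)) (f' := fun _ => 0)
    ((continuousOn_integral_logKernel.mono (Icc_subset_Icc_right hs₁)).sub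
      (continuousOn_const.mul (continuousOn_log.comp (by fun_prop)
        fun x hx => by simp only [mem_compl_iff, mem_singleton_iff]; linarith [hx.1])))
    (fun x hx => by
      have h := (hasDerivAt_integral_logKernel hx.1 (hx.2.trans_le hs₁)).sub
        ((((hasDerivAt_id' x).const_add 1).log (by linarith [hx.1])).const_mul π)
      exact h.congr_deriv (by ring))
    intervalIntegrable_const
  simp only [intervalIntegral.integral_zero, logKernel_zero_left, integral_zero, add_zero,
    log_one, mul_zero, sub_zero] at h
  linarith

lemma pi_div_two_sub_arctan_eq_arctan_inv {c φ : ℝ} (hc : 0 < c) (hsin : 0 < sin φ)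
    (hcos : 0 < c + cos φ) :
    π / 2 - arctan ((c + cos φ) / sin φ) = arctan (c⁻¹ * sin φ / (1 + c⁻¹ * cos φ)) := by
  have harg : c⁻¹ * sin φ / (1 + c⁻¹ * cos φ) = ((c + cos φ) / sin φ)⁻¹ := by
    field_simp
  rw [harg, arctan_inv_of_pos (div_pos hcos hsin)]

lemma pi_div_two_sub_arctan_eq_sub_arctan {c φ : ℝ} (hφ : φ ∈ Ioo 0 π)
    (hM : 0 < 1 + c * cos φ) :
    π / 2 - arctan ((c + cos φ) / sin φ) = φ - arctan (c * sin φ / (1 + c * cos φ)) := by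
  have hsin := sin_pos_of_pos_of_lt_pi hφ.1 hφ.2
  have hprod : c * sin φ / (1 + c * cos φ) * (cos φ / sin φ) < 1 := by
    rw [show c * sin φ / (1 + c * cos φ) * (cos φ / sin φ) = c * cos φ / (1 + c * cos φ) by
      field_simp, div_lt_one hM]
    linarith
  have h := arctan_add hprod
  rw [arctan_cos_div_sin hφ] at h
  have harg : (c * sin φ / (1 + c * cos φ) + cos φ / sin φ) /
      (1 - c * sin φ / (1 + c * cos φ) * (cos φ / sin φ)) = (c + cos φ) / sin φ := by
    field_simp
    linear_combination c * sin_sq_add_cos_sq φ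
  rw [harg] at h
  linarith

/-- `π / 2 - arctan ((c + cos φ) / sin φ)` is `arg (c + e^{iφ})`. -/
def edgeIntegrand (c φ : ℝ) : ℝ :=
  (π / 2 - arctan ((c + cos φ) / sin φ)) * ((1 + cos φ) / sin φ)

lemma edgeIntegrand_eq_logKernel_inv {c φ : ℝ} (hc : 1 ≤ c) (hφ : φ ∈ Ioo 0 π) :
    edgeIntegrand c φ = logKernel c⁻¹ φ := by
  rw [edgeIntegrand, logKernel, pi_div_two_sub_arctan_eq_arctan_inv (by linarith)
    (sin_pos_of_pos_of_lt_pi hφ.1 hφ.2) (by linarith [neg_one_lt_cos_of_mem_Ioo hφ])]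

lemma edgeIntegrand_eq_sub {c φ : ℝ} (hc₀ : 0 ≤ c) (hc₁ : c ≤ 1) (hφ : φ ∈ Ioo 0 π) :
    edgeIntegrand c φ = 2 * logKernel 1 φ - logKernel c φ := by
  -- the two expressions of `arg (1 + e^{iφ})` give `φ = 2 arctan (sin φ / (1 + cos φ))`
  have hsin := sin_pos_of_pos_of_lt_pi hφ.1 hφ.2
  have hφ' : φ = 2 * arctan (1 * sin φ / (1 + 1 * cos φ)) := by
    have h₁ := pi_div_two_sub_arctan_eq_arctan_inv one_pos hsin
      (by linarith [neg_one_lt_cos_of_mem_Ioo hφ])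
    have h₂ := pi_div_two_sub_arctan_eq_sub_arctan hφ (one_add_mul_cos_pos zero_le_one le_rfl hφ)
    rw [inv_one] at h₁
    linarith
  rw [edgeIntegrand, logKernel, logKernel,
    pi_div_two_sub_arctan_eq_sub_arctan hφ (one_add_mul_cos_pos hc₀ hc₁ hφ)]
  linear_combination ((1 + cos φ) / sin φ) * hφ'

lemma integrableOn_and_integral_edgeIntegrand_of_one_le {c : ℝ} (hc : 1 ≤ c) :
    IntegrableOn (edgeIntegrand c) (Ioo 0 π) ∧
      ∫ φ in Ioo 0 π, edgeIntegrand c φ = π * log (1 + c⁻¹) := by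
  have hc₀ : 0 ≤ c⁻¹ := by positivity
  have hc₁ : c⁻¹ ≤ 1 := inv_le_one_of_one_le₀ hc
  have heq : EqOn (edgeIntegrand c) (logKernel c⁻¹) (Ioo 0 π) :=
    fun φ hφ => edgeIntegrand_eq_logKernel_inv hc hφ
  exact ⟨(integrableOn_logKernel hc₀ hc₁).congr_fun heq.symm measurableSet_Ioo,
    (setIntegral_congr_fun measurableSet_Ioo heq).trans (integral_logKernel hc₀ hc₁)⟩

lemma integrableOn_and_integral_edgeIntegrand_of_le_one {c : ℝ} (hc₀ : 0 ≤ c) (hc₁ : c ≤ 1) :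
    IntegrableOn (edgeIntegrand c) (Ioo 0 π) ∧
      ∫ φ in Ioo 0 π, edgeIntegrand c φ = π * log (4 / (1 + c)) := by
  have heq : EqOn (edgeIntegrand c) (fun φ => 2 * logKernel 1 φ - logKernel c φ) (Ioo 0 π) :=
    fun φ hφ => edgeIntegrand_eq_sub hc₀ hc₁ hφ
  have h₁ := (integrableOn_logKernel zero_le_one le_rfl).const_mul 2
  have hc := integrableOn_logKernel hc₀ hc₁
  refine ⟨IntegrableOn.congr_fun (h₁.sub hc) heq.symm measurableSet_Ioo, ?_⟩
  rw [setIntegral_congr_fun measurableSet_Ioo heq, integral_sub h₁ hc, integral_const_mul,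
    integral_logKernel zero_le_one le_rfl, integral_logKernel hc₀ hc₁,
    log_div (by norm_num) (by linarith), show (4 : ℝ) = 2 ^ 2 by norm_num, log_pow]
  norm_num
  ring

def edgeDensity (θ t x : ℝ) : ℝ :=
  (θ * π)⁻¹ * (π / 2 - arctan ((x + θ * (t - 1)) / √(4 * θ * t * x - (x + θ * (t - 1)) ^ 2)))

lemma eqDensity_div_eq_indicator (θ t b : ℝ) :
    (fun x => eqDensity θ t x / (b - x)) =
      (Ioo (θ * (√t - 1) ^ 2) (θ * (√t + 1) ^ 2)).indicator
          (fun x => edgeDensity θ t x / (b - x)) +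
        {x | t < 1 ∧ 0 ≤ x ∧ x ≤ θ * (√t - 1) ^ 2}.indicator (fun x => θ⁻¹ * (b - x)⁻¹) := by
  funext x
  simp only [Pi.add_apply, indicator, mem_Ioo, mem_ofPred_eq, eqDensity, edgeDensity]
  split_ifs with hedge hflat
  · exact absurd hflat.2.2 (not_le.2 hedge.1)
  all_goals simp [div_eq_mul_inv]

lemma eqDensity_eq_zero_of_le {θ t x : ℝ} (hθ : 0 < θ) (ht : 0 < t)
    (hx : θ * (1 + √t) ^ 2 ≤ x) : eqDensity θ t x = 0 := by
  have : θ * (√t - 1) ^ 2 < θ * (1 + √t) ^ 2 := by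
    nlinarith [mul_pos hθ (sqrt_pos.2 ht)]
  rw [eqDensity, if_neg (by intro h; nlinarith [h.2]), if_neg (by intro h; linarith [h.2.2])]

lemma image_add_mul_cos_Ioo {m a : ℝ} (ha : 0 < a) :
    (fun φ => m + a * cos φ) '' Ioo 0 π = Ioo (m - a) (m + a) := by
  ext x
  constructor
  · rintro ⟨φ, hφ, rfl⟩
    have hcos := neg_one_lt_cos_of_mem_Ioo hφ
    have hcos' : cos φ < 1 := by
      nlinarith [sin_pos_of_pos_of_lt_pi hφ.1 hφ.2, sin_sq_add_cos_sq φ, cos_le_one φ]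
    constructor <;> nlinarith
  · rintro ⟨h₁, h₂⟩
    have hv₁ : -1 < (x - m) / a := by rw [lt_div_iff₀ ha]; linarith
    have hv₂ : (x - m) / a < 1 := by rw [div_lt_iff₀ ha]; linarith
    refine ⟨arccos ((x - m) / a), ⟨arccos_pos.2 hv₂, arccos_lt_pi.2 hv₁⟩, ?_⟩
    dsimp only
    rw [cos_arccos hv₁.le hv₂.le]
    field_simp
    ring

lemma injOn_add_mul_cos {m a : ℝ} (ha : a ≠ 0) : InjOn (fun φ => m + a * cos φ) (Ioo 0 π) :=
  fun _ hx _ hy hxy => injOn_cos (Ioo_subset_Icc_self hx) (Ioo_subset_Icc_self hy)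
    (mul_left_cancel₀ ha (add_left_cancel hxy))

lemma integrableOn_Ioo_iff_cos_subst (F : ℝ → ℝ) {m a : ℝ} (ha : 0 < a) :
    IntegrableOn F (Ioo (m - a) (m + a)) ↔
      IntegrableOn (fun φ => a * sin φ * F (m + a * cos φ)) (Ioo 0 π) := by
  rw [← image_add_mul_cos_Ioo ha, integrableOn_image_iff_integrableOn_abs_deriv_smul
    measurableSet_Ioo (fun φ _ => (((hasDerivAt_cos φ).const_mul a).const_add m).hasDerivWithinAt)
    (injOn_add_mul_cos ha.ne') F]
  refine integrableOn_congr_fun (fun φ hφ => ?_) measurableSet_Ioo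
  rw [smul_eq_mul, abs_of_nonpos (by nlinarith [sin_pos_of_pos_of_lt_pi hφ.1 hφ.2])]
  ring

lemma setIntegral_Ioo_eq_cos_subst (F : ℝ → ℝ) {m a : ℝ} (ha : 0 < a) :
    ∫ x in Ioo (m - a) (m + a), F x = ∫ φ in Ioo 0 π, a * sin φ * F (m + a * cos φ) := by
  rw [← image_add_mul_cos_Ioo ha, integral_image_eq_integral_abs_deriv_smul
    measurableSet_Ioo (fun φ _ => (((hasDerivAt_cos φ).const_mul a).const_add m).hasDerivWithinAt)
    (injOn_add_mul_cos ha.ne') F]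
  refine setIntegral_congr_fun measurableSet_Ioo (fun φ hφ => ?_)
  rw [smul_eq_mul, abs_of_nonpos (by nlinarith [sin_pos_of_pos_of_lt_pi hφ.1 hφ.2])]
  ring

lemma mul_sin_mul_edgeDensity_div {θ c φ : ℝ} (hθ : 0 < θ) (hc : 0 < c) (hφ : φ ∈ Ioo 0 π) :
    2 * θ * c * sin φ * (edgeDensity θ (c ^ 2) (θ * (1 + c ^ 2) + 2 * θ * c * cos φ) /
      (θ * (1 + c) ^ 2 - (θ * (1 + c ^ 2) + 2 * θ * c * cos φ))) =
        (θ * π)⁻¹ * edgeIntegrand c φ := by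
  have hsin := sin_pos_of_pos_of_lt_pi hφ.1 hφ.2
  have hcos : cos φ < 1 := by
    nlinarith [sin_sq_add_cos_sq φ, cos_le_one φ]
  set x := θ * (1 + c ^ 2) + 2 * θ * c * cos φ
  have hshift : x + θ * (c ^ 2 - 1) = 2 * θ * c * (c + cos φ) := by ring
  have hroot : √(4 * θ * c ^ 2 * x - (x + θ * (c ^ 2 - 1)) ^ 2) = 2 * θ * c * sin φ := by
    rw [← sqrt_sq (by positivity : 0 ≤ 2 * θ * c * sin φ)]
    congr 1
    linear_combination (-4 * θ ^ 2 * c ^ 2) * sin_sq_add_cos_sq φ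
  have hgap : θ * (1 + c) ^ 2 - x = 2 * θ * c * (1 - cos φ) := by ring
  have hcot : sin φ / (1 - cos φ) = (1 + cos φ) / sin φ := by
    rw [div_eq_div_iff (by linarith) hsin.ne']
    linear_combination sin_sq_add_cos_sq φ
  rw [edgeDensity, edgeIntegrand, hroot, hshift, hgap, mul_div_mul_left _ _ (by positivity), ← hcot]
  field_simp

lemma integrableOn_and_integral_edgeDensity_div {θ c : ℝ} (hθ : 0 < θ) (hc : 0 < c)
    (hint : IntegrableOn (edgeIntegrand c) (Ioo 0 π)) :
    IntegrableOn (fun x => edgeDensity θ (c ^ 2) x / (θ * (1 + c) ^ 2 - x))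
        (Ioo (θ * (c - 1) ^ 2) (θ * (c + 1) ^ 2)) ∧
      ∫ x in Ioo (θ * (c - 1) ^ 2) (θ * (c + 1) ^ 2),
          edgeDensity θ (c ^ 2) x / (θ * (1 + c) ^ 2 - x) =
        (θ * π)⁻¹ * ∫ φ in Ioo 0 π, edgeIntegrand c φ := by
  have hm : θ * (c - 1) ^ 2 = θ * (1 + c ^ 2) - 2 * θ * c := by ring
  have hp : θ * (c + 1) ^ 2 = θ * (1 + c ^ 2) + 2 * θ * c := by ring
  have heq : EqOn (fun φ => 2 * θ * c * sin φ * (edgeDensity θ (c ^ 2)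
      (θ * (1 + c ^ 2) + 2 * θ * c * cos φ) /
        (θ * (1 + c) ^ 2 - (θ * (1 + c ^ 2) + 2 * θ * c * cos φ))))
      (fun φ => (θ * π)⁻¹ * edgeIntegrand c φ) (Ioo 0 π) :=
    fun φ hφ => mul_sin_mul_edgeDensity_div hθ hc hφ
  rw [hm, hp, integrableOn_Ioo_iff_cos_subst _ (by positivity),
    setIntegral_Ioo_eq_cos_subst _ (by positivity), setIntegral_congr_fun measurableSet_Ioo heq,
    integral_const_mul]
  exact ⟨IntegrableOn.congr_fun (hint.const_mul _) heq.symm measurableSet_Ioo, rfl⟩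

lemma integrableOn_and_integral_Icc_inv_sub {a b B : ℝ} (hab : a ≤ b) (hb : b < B) :
    IntegrableOn (fun x => (B - x)⁻¹) (Icc a b) ∧
      ∫ x in Icc a b, (B - x)⁻¹ = log ((B - a) / (B - b)) := by
  refine ⟨ContinuousOn.integrableOn_Icc (ContinuousOn.inv₀ (by fun_prop)
    fun x hx => by linarith [hx.2]), ?_⟩
  rw [integral_Icc_eq_integral_Ioc, ← intervalIntegral.integral_of_le hab,
    intervalIntegral.integral_comp_sub_left (fun x => x⁻¹),
    integral_inv_of_pos (by linarith) (by linarith)]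

lemma integrable_and_integral_eqDensity_div_of_one_le {θ c : ℝ} (hθ : 0 < θ) (hc : 1 ≤ c) :
    Integrable (fun x => eqDensity θ (c ^ 2) x / (θ * (1 + c) ^ 2 - x)) ∧
      ∫ x, eqDensity θ (c ^ 2) x / (θ * (1 + c) ^ 2 - x) = θ⁻¹ * log (1 + 1 / c) := by
  have hflat : {x : ℝ | c ^ 2 < 1 ∧ 0 ≤ x ∧ x ≤ θ * (c - 1) ^ 2} = ∅ :=
    eq_empty_of_forall_notMem fun x hx => by nlinarith [hx.1]
  obtain ⟨hint, hval⟩ := integrableOn_and_integral_edgeIntegrand_of_one_le hc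
  obtain ⟨hedge, hedge_val⟩ := integrableOn_and_integral_edgeDensity_div hθ (by linarith) hint
  rw [eqDensity_div_eq_indicator, sqrt_sq (by linarith), hflat, indicator_empty', add_zero,
    integrable_indicator_iff measurableSet_Ioo, integral_indicator measurableSet_Ioo, hedge_val,
    hval]
  refine ⟨hedge, ?_⟩
  field_simp

lemma integrable_and_integral_eqDensity_div_of_lt_one {θ c : ℝ} (hθ : 0 < θ) (hc₀ : 0 < c)
    (hc₁ : c < 1) :
    Integrable (fun x => eqDensity θ (c ^ 2) x / (θ * (1 + c) ^ 2 - x)) ∧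
      ∫ x, eqDensity θ (c ^ 2) x / (θ * (1 + c) ^ 2 - x) = θ⁻¹ * log (1 + 1 / c) := by
  have hflat : {x : ℝ | c ^ 2 < 1 ∧ 0 ≤ x ∧ x ≤ θ * (c - 1) ^ 2} = Icc 0 (θ * (c - 1) ^ 2) := by
    ext x
    simp [show c ^ 2 < 1 by nlinarith]
  obtain ⟨hint, hval⟩ := integrableOn_and_integral_edgeIntegrand_of_le_one hc₀.le hc₁.le
  obtain ⟨hedge, hedge_val⟩ := integrableOn_and_integral_edgeDensity_div hθ hc₀ hint
  obtain ⟨hplat, hplat_val⟩ := integrableOn_and_integral_Icc_inv_sub (B := θ * (1 + c) ^ 2)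
    (by positivity : 0 ≤ θ * (c - 1) ^ 2) (by nlinarith [mul_pos hθ hc₀])
  have hratio : (θ * (1 + c) ^ 2 - 0) / (θ * (1 + c) ^ 2 - θ * (c - 1) ^ 2) =
      (1 + c) ^ 2 / (4 * c) := by
    rw [sub_zero, show θ * (1 + c) ^ 2 - θ * (c - 1) ^ 2 = θ * (4 * c) by ring,
      mul_div_mul_left _ _ hθ.ne']
  rw [eqDensity_div_eq_indicator, sqrt_sq hc₀.le, hflat]
  have h₁ := (integrable_indicator_iff measurableSet_Ioo).2 hedge
  have h₂ := (integrable_indicator_iff measurableSet_Icc).2 (hplat.const_mul θ⁻¹)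
  refine ⟨h₁.add h₂, ?_⟩
  rw [integral_add' h₁ h₂, integral_indicator measurableSet_Ioo,
    integral_indicator measurableSet_Icc, integral_const_mul, hedge_val, hval, hplat_val, hratio]
  calc (θ * π)⁻¹ * (π * log (4 / (1 + c))) + θ⁻¹ * log ((1 + c) ^ 2 / (4 * c))
      = θ⁻¹ * log (4 / (1 + c) * ((1 + c) ^ 2 / (4 * c))) := by
        rw [log_mul (by positivity) (by positivity)]
        field_simp
    _ = θ⁻¹ * log (1 + 1 / c) := by
        congr 2
        field_simp
        ring

lemma integrable_and_integral_eqDensity_div {θ t : ℝ} (hθ : 0 < θ) (ht : 0 < t) :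
    Integrable (fun x => eqDensity θ t x / (θ * (1 + √t) ^ 2 - x)) ∧
      ∫ x, eqDensity θ t x / (θ * (1 + √t) ^ 2 - x) = θ⁻¹ * log (1 + 1 / √t) := by
  obtain ⟨c, hc, rfl⟩ : ∃ c, 0 < c ∧ t = c ^ 2 := ⟨√t, sqrt_pos.2 ht, (sq_sqrt ht.le).symm⟩
  rw [sqrt_sq hc.le]
  rcases le_or_gt 1 c with hc₁ | hc₁
  · exact integrable_and_integral_eqDensity_div_of_one_le hθ hc₁
  · exact integrable_and_integral_eqDensity_div_of_lt_one hθ hc hc₁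

lemma tendsto_integral_div_add_sub {f : ℝ → ℝ} {b : ℝ} (hf : ∀ x, b ≤ x → f x = 0)
    (hint : Integrable (fun x => f x / (b - x))) :
    Tendsto (fun ε => ∫ x, f x / (b + ε - x)) (𝓝[>] 0) (𝓝 (∫ x, f x / (b - x))) := by
  -- the integrands inherit measurability from `f x / (b - x)` through this factorisation
  have hfac : ∀ ε > 0, ∀ x, f x / (b + ε - x) = f x / (b - x) * ((b - x) / (b + ε - x)) := by
    intro ε hε x
    rcases lt_or_ge x b with hx | hx
    · have : b - x ≠ 0 := by linarith
      have : b + ε - x ≠ 0 := by linarith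
      field_simp
    · simp [hf x hx]
  refine tendsto_integral_filter_of_dominated_convergence (fun x => ‖f x / (b - x)‖) ?_ ?_
    hint.norm ?_
  · filter_upwards [self_mem_nhdsWithin] with ε hε
    exact (hint.aestronglyMeasurable.mul (Measurable.aestronglyMeasurable (by fun_prop))).congr
      (ae_of_all _ fun x => (hfac ε hε x).symm)
  · filter_upwards [self_mem_nhdsWithin] with ε (hε : 0 < ε)
    refine ae_of_all _ fun x => ?_
    rcases lt_or_ge x b with hx | hx
    · rw [norm_div, norm_div, norm_of_nonneg (by linarith : 0 ≤ b + ε - x),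
        norm_of_nonneg (by linarith : 0 ≤ b - x)]
      exact div_le_div_of_nonneg_left (norm_nonneg _) (by linarith) (by linarith)
    · simp [hf x hx]
  · refine ae_of_all _ fun x => ?_
    rcases lt_or_ge x b with hx | hx
    · refine tendsto_const_nhds.div ?_ (by linarith)
      exact ((by fun_prop : Continuous fun ε : ℝ => b + ε - x).tendsto' 0 (b - x)
        (by simp)).mono_left nhdsWithin_le_nhds
    · simp only [hf x hx, zero_div]
      exact tendsto_const_nhds

end

theorem stieltjes_transform_at_edge
    (θ t : ℝ) (hθ : 0 < θ) (ht : 0 < t) :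
    Filter.Tendsto
      (fun ε : ℝ => ∫ x : ℝ, eqDensity θ t x / (θ * (1 + Real.sqrt t) ^ 2 + ε - x))
      (nhdsWithin 0 (Set.Ioi 0))
      (nhds (θ⁻¹ * Real.log (1 + 1 / Real.sqrt t))) := by
  obtain ⟨hint, hval⟩ := integrable_and_integral_eqDensity_div hθ ht
  rw [← hval]
  exact tendsto_integral_div_add_sub (fun x hx => eqDensity_eq_zero_of_le hθ ht hx) hint

end
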